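/- Let (W, S) be a Coxeter system, I ⊆ S with |I| ≤ |S| − 2, and let s, s' be two distinct simple reflections not in I. Let t be a reflection whose reduced expressions contain s'. Then for every w ∈ W_{I ∪ {s}}, we have ℓ((tw)^I) > ℓ(w^I); that is, every coset wW_I with w ∈ W_{I∪{s}} lies on the strictly increasing side of the reflection t. -/

import Mathlib

/-!
The key is the strong exchange condition: if `t` is a reflection with `ℓ(wt) < ℓ(w)` and
`w = s_{i_1} ⋯ s_{i_k}` is any expression, reduced or not, then `t` occurs in its right inversion
sequence. It comes from the sign representation of `W` on `W × {±1}`,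
`s · (t, ε) = (sts, ε · (-1)^[t = s])`, whose sign cocycle `η(w, t)` is `-1` exactly at the right
inversions of `w`. Hence a right inversion of an element of `W_A` lies in `W_A` and has a reduced
expression in the letters of `A`; if every reduced expression of `t` uses `s_j ∉ A`, then
`ℓ(y) < ℓ(yt)` and `ℓ(y) < ℓ(ty)` for all `y ∈ W_A`.

For the theorem take `A = I ∪ {s}` and `x` of minimal length in `twW_I`. Then `tx ∈ wW_I ⊆ W_A`,
so `ℓ(tx) < ℓ(t · tx) = ℓ(x)`, and `ℓ(w^I) ≤ ℓ(tx) < ℓ(x) = ℓ((tw)^I)`.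
-/

variable {B W : Type*} [Group W] {M : CoxeterMatrix B}

/-- The standard parabolic subgroup `W_I`. -/
def parab (cs : CoxeterSystem M W) (I : Set B) : Subgroup W :=
  Subgroup.closure (cs.simple '' I)

/-- `ℓ(w^I)`: the minimal length of an element in the coset `x = wW_I`. -/
noncomputable def minLenQ (cs : CoxeterSystem M W) (I : Set B) (x : W ⧸ parab cs I) : ℕ :=
  sInf (cs.length '' {u : W | (QuotientGroup.mk u : W ⧸ parab cs I) = x})

namespace CoxeterSystem

open List

open scoped Classical

variable (cs : CoxeterSystem M W)

local prefix:100 "π " => cs.wordProd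
local prefix:100 "ℓ " => cs.length
local prefix:100 "ris " => cs.rightInvSeq
local prefix:100 "lis " => cs.leftInvSeq

noncomputable def signFlip (i : B) (p : W × ℤˣ) : W × ℤˣ :=
  (cs.simple i * p.1 * cs.simple i, (if p.1 = cs.simple i then -1 else 1) * p.2)

theorem signFlip_involutive (i : B) : Function.Involutive (cs.signFlip i) := by
  rintro ⟨t, e⟩
  have hfix : cs.simple i * t * cs.simple i = cs.simple i ↔ t = cs.simple i := by
    rw [mul_eq_right, mul_eq_one_iff_inv_eq, inv_simple, eq_comm]
  by_cases ht : t = cs.simple i <;>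
    simp [signFlip, hfix, ht, ← mul_assoc, cs.simple_mul_simple_self]

noncomputable def signPerm (i : B) : Equiv.Perm (W × ℤˣ) := (cs.signFlip_involutive i).toPerm

theorem prod_map_signPerm_apply (ω : List B) (t : W) (e : ℤˣ) :
    (ω.map cs.signPerm).prod (t, e) = (π ω * t * (π ω)⁻¹, (-1) ^ (ris ω).count t * e) := by
  induction ω with
  | nil => simp
  | cons i ω ih =>
    have hfix : π ω * t * (π ω)⁻¹ = cs.simple i ↔ (π ω)⁻¹ * cs.simple i * π ω = t := by
      constructor
      · intro h; rw [← h]; group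
      · rintro rfl; group
    rw [map_cons, prod_cons, Equiv.Perm.mul_apply, ih]
    simp only [signPerm, Function.Involutive.coe_toPerm, signFlip, hfix, rightInvSeq, count_cons,
      beq_iff_eq, wordProd_cons, mul_inv_rev, inv_simple]
    refine Prod.ext (by simp only [mul_assoc]) ?_
    split_ifs <;> simp [pow_succ, mul_comm]

theorem rightInvSeq_eq_map_leftInvSeq (ω : List B) :
    ris ω = (lis ω).map (MulAut.conj (π ω)⁻¹) := by
  induction ω with
  | nil => rfl
  | cons i ω ih =>
    simp only [rightInvSeq, leftInvSeq, ih, map_cons, map_map, wordProd_cons, mul_inv_rev,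
      inv_simple, MulAut.conj_apply, inv_inv, cons.injEq]
    exact ⟨by simp [mul_assoc], map_congr_left fun x _ => by simp [mul_assoc]⟩

theorem prod_map_alternatingWord_two_mul {G : Type*} [Monoid G] (f : B → G)
    (i i' : B) (p : ℕ) : ((alternatingWord i i' (2 * p)).map f).prod = (f i * f i') ^ p := by
  induction p with
  | zero => simp [alternatingWord]
  | succ p ih =>
    rw [show 2 * (p + 1) = 2 * p + 1 + 1 by ring, alternatingWord_succ', alternatingWord_succ']
    simp [ih, pow_succ', mul_assoc, parity_simps]

theorem leftInvSeq_alternatingWord_two_mul (i i' : B) (p : ℕ) :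
    lis (alternatingWord i i' (2 * p)) =
      (range (2 * p)).map fun k => cs.simple i * (cs.simple i' * cs.simple i) ^ k := by
  refine ext_getElem (by simp) fun k hk _ => ?_
  rw [getElem_leftInvSeq_alternatingWord cs i i' p k (by simpa using hk),
    prod_alternatingWord_eq_mul_pow]
  simp [parity_simps, Nat.mul_add_div]

/-- The braid word has product `1`, and its inversion sequence is periodic of period `M i i'`,
so every reflection occurs in it an even number of times. -/
theorem isLiftable_signPerm : M.IsLiftable cs.signPerm := by
  intro i i'
  ext ⟨t, e⟩ : 1
  set ω := alternatingWord i i' (2 * M i i')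
  have hπ : π ω = 1 := by simp [ω, prod_alternatingWord_eq_mul_pow]
  have hcount : Even ((ris ω).count t) := by
    have hperiodic : ∀ k, cs.simple i * (cs.simple i' * cs.simple i) ^ (M i i' + k) =
        cs.simple i * (cs.simple i' * cs.simple i) ^ k := by
      simp [pow_add]
    rw [rightInvSeq_eq_map_leftInvSeq, hπ, inv_one, map_one, MulAut.one_def, MulEquiv.coe_refl,
      map_id, leftInvSeq_alternatingWord_two_mul, two_mul, range_add, map_append, map_map]
    simp only [Function.comp_def, hperiodic, count_append]
    exact ⟨_, rfl⟩
  rw [← prod_map_alternatingWord_two_mul, prod_map_signPerm_apply, hπ, hcount.neg_one_pow]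
  simp

noncomputable def signRep : W →* Equiv.Perm (W × ℤˣ) :=
  cs.lift ⟨cs.signPerm, cs.isLiftable_signPerm⟩

theorem signRep_wordProd (ω : List B) : cs.signRep (π ω) = (ω.map cs.signPerm).prod := by
  rw [wordProd, map_list_prod, map_map]
  congr 2
  funext i
  exact cs.lift_apply_simple cs.isLiftable_signPerm i

/-- `η(w, t)`, read off from `w · (t, ε) = (wtw⁻¹, η(w, t) ε)`. -/
noncomputable def rightInvSign (w t : W) : ℤˣ := (cs.signRep w (t, 1)).2

theorem rightInvSign_wordProd (ω : List B) (t : W) :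
    cs.rightInvSign (π ω) t = (-1) ^ (ris ω).count t := by
  simp [rightInvSign, signRep_wordProd, prod_map_signPerm_apply]

theorem signRep_apply (w t : W) (e : ℤˣ) :
    cs.signRep w (t, e) = (w * t * w⁻¹, cs.rightInvSign w t * e) := by
  obtain ⟨ω, rfl⟩ := cs.wordProd_surjective w
  simp [rightInvSign_wordProd, signRep_wordProd, prod_map_signPerm_apply]

theorem rightInvSign_mul (v w t : W) :
    cs.rightInvSign (v * w) t = cs.rightInvSign v (w * t * w⁻¹) * cs.rightInvSign w t := by
  rw [rightInvSign, map_mul, Equiv.Perm.mul_apply, signRep_apply cs w, mul_one, signRep_apply]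

theorem rightInvSign_one (t : W) : cs.rightInvSign 1 t = 1 := by
  simp [rightInvSign]

theorem rightInvSign_simple_self (i : B) : cs.rightInvSign (cs.simple i) (cs.simple i) = -1 := by
  simpa using cs.rightInvSign_wordProd [i] (cs.simple i)

theorem IsReflection.rightInvSign_self {t : W} (ht : cs.IsReflection t) :
    cs.rightInvSign t t = -1 := by
  obtain ⟨u, i, rfl⟩ := ht
  set r := cs.simple i
  have hconj : u⁻¹ * (u * r * u⁻¹) * u = r := by group
  have hcancel : cs.rightInvSign u r * cs.rightInvSign u⁻¹ (u * r * u⁻¹) = 1 := by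
    have := cs.rightInvSign_mul u u⁻¹ (u * r * u⁻¹)
    rwa [mul_inv_cancel, rightInvSign_one, inv_inv, hconj, eq_comm] at this
  calc cs.rightInvSign (u * r * u⁻¹) (u * r * u⁻¹)
      = cs.rightInvSign (u * r) r * cs.rightInvSign u⁻¹ (u * r * u⁻¹) := by
        rw [rightInvSign_mul, inv_inv, hconj]
    _ = cs.rightInvSign u r * -1 * cs.rightInvSign u⁻¹ (u * r * u⁻¹) := by
        rw [rightInvSign_mul, mul_inv_cancel_right, rightInvSign_simple_self]
    _ = -1 := by rw [mul_neg_one, neg_mul, hcancel]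

theorem mem_rightInvSeq_of_rightInvSign_eq_neg_one {ω : List B} {t : W}
    (h : cs.rightInvSign (π ω) t = -1) : t ∈ ris ω := by
  by_contra hnot
  rw [rightInvSign_wordProd, count_eq_zero_of_not_mem hnot, pow_zero] at h
  exact absurd h (by decide)

theorem isRightInversion_of_rightInvSign_eq_neg_one {w t : W} (h : cs.rightInvSign w t = -1) :
    cs.IsRightInversion w t := by
  obtain ⟨σ, hσ, rfl⟩ := cs.exists_isReduced w
  exact cs.isRightInversion_of_mem_rightInvSeq hσ (cs.mem_rightInvSeq_of_rightInvSign_eq_neg_one h)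

/-- If `η(w, t) = 1` then `η(wt, t) = -1`, so `t` would be an inversion of both `w` and `wt`. -/
theorem rightInvSign_eq_neg_one_of_isRightInversion {w t : W} (h : cs.IsRightInversion w t) :
    cs.rightInvSign w t = -1 := by
  obtain ⟨ht, hlt⟩ := h
  by_contra hne
  have hone : cs.rightInvSign w t = 1 := (Int.units_eq_one_or _).resolve_right hne
  have hinv : cs.IsRightInversion (w * t) t := by
    refine cs.isRightInversion_of_rightInvSign_eq_neg_one ?_
    rw [rightInvSign_mul, mul_inv_cancel_right, hone, ht.rightInvSign_self, one_mul]
  have := hinv.2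
  rw [mul_assoc, ht.mul_self, mul_one] at this
  omega

theorem rightInvSign_eq_neg_one_iff {w t : W} :
    cs.rightInvSign w t = -1 ↔ cs.IsRightInversion w t :=
  ⟨cs.isRightInversion_of_rightInvSign_eq_neg_one, cs.rightInvSign_eq_neg_one_of_isRightInversion⟩

theorem mem_rightInvSeq_of_isRightInversion {ω : List B} {t : W}
    (h : cs.IsRightInversion (π ω) t) : t ∈ ris ω :=
  cs.mem_rightInvSeq_of_rightInvSign_eq_neg_one (cs.rightInvSign_eq_neg_one_iff.mpr h)

theorem exists_wordProd_mul_eq_eraseIdx {ω : List B} {t : W} (ht : t ∈ ris ω) :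
    ∃ m < ω.length, π ω * t = π (ω.eraseIdx m) := by
  obtain ⟨m, hm, rfl⟩ := mem_iff_getElem.mp ht
  refine ⟨m, by simpa using hm, ?_⟩
  rw [← getD_eq_getElem _ 1 hm, wordProd_mul_getD_rightInvSeq]

theorem exists_reduced_sublist (ω : List B) :
    ∃ σ : List B, σ <+ ω ∧ cs.IsReduced σ ∧ π σ = π ω := by
  induction ω using reverseRecOn with
  | nil => exact ⟨[], Sublist.refl _, by simp [IsReduced], rfl⟩
  | append_singleton ω k ih =>
    obtain ⟨σ, hsub, hred, hprod⟩ := ih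
    have hprod' : π (σ ++ [k]) = π (ω ++ [k]) := by simp [wordProd_append, hprod]
    rcases cs.length_mul_simple (π σ) k with hup | hdown
    · refine ⟨σ ++ [k], hsub.append (Sublist.refl _), ?_, hprod'⟩
      simp [IsReduced, wordProd_append, hup, hred.eq]
    · have hinv : cs.IsRightInversion (π σ) (cs.simple k) := ⟨cs.isReflection_simple k, by omega⟩
      obtain ⟨m, hm, herase⟩ :=
        cs.exists_wordProd_mul_eq_eraseIdx (cs.mem_rightInvSeq_of_isRightInversion hinv)
      refine ⟨σ.eraseIdx m, ((σ.eraseIdx_sublist m).trans hsub).trans (sublist_append_left _ _),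
        ?_, ?_⟩
      · rw [IsReduced, ← herase, length_eraseIdx_of_lt hm]
        have := hred.eq
        omega
      · rw [← herase, ← hprod', wordProd_append, wordProd_singleton]

theorem wordProd_mem_parab {A : Set B} {ω : List B} (h : ∀ b ∈ ω, b ∈ A) :
    π ω ∈ parab cs A :=
  Subgroup.list_prod_mem _ (forall_mem_map.mpr fun b hb =>
    Subgroup.subset_closure (Set.mem_image_of_mem _ (h b hb)))

theorem exists_word_of_mem_parab {A : Set B} {w : W} (hw : w ∈ parab cs A) :
    ∃ ω : List B, (∀ b ∈ ω, b ∈ A) ∧ π ω = w := by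
  induction hw using Subgroup.closure_induction with
  | mem x hx =>
    obtain ⟨b, hb, rfl⟩ := hx
    exact ⟨[b], by simpa using hb, cs.wordProd_singleton b⟩
  | one => exact ⟨[], by simp, cs.wordProd_nil⟩
  | mul x y _ _ ihx ihy =>
    obtain ⟨ω₁, h₁, rfl⟩ := ihx
    obtain ⟨ω₂, h₂, rfl⟩ := ihy
    exact ⟨ω₁ ++ ω₂, fun b hb => (mem_append.mp hb).elim (h₁ b) (h₂ b), cs.wordProd_append ω₁ ω₂⟩
  | inv x _ ihx =>
    obtain ⟨ω, h, rfl⟩ := ihx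
    exact ⟨ω.reverse, by simpa using h, cs.wordProd_reverse ω⟩

theorem exists_reduced_word_of_mem_parab {A : Set B} {w : W} (hw : w ∈ parab cs A) :
    ∃ σ : List B, cs.IsReduced σ ∧ (∀ b ∈ σ, b ∈ A) ∧ π σ = w := by
  obtain ⟨ω, hA, rfl⟩ := cs.exists_word_of_mem_parab hw
  obtain ⟨σ, hsub, hred, hprod⟩ := cs.exists_reduced_sublist ω
  exact ⟨σ, hred, fun b hb => hA b (hsub.subset hb), hprod⟩

theorem mem_parab_of_mem_rightInvSeq {A : Set B} {ω : List B} (h : ∀ b ∈ ω, b ∈ A) {t : W}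
    (ht : t ∈ ris ω) : t ∈ parab cs A := by
  obtain ⟨m, -, herase⟩ := cs.exists_wordProd_mul_eq_eraseIdx ht
  rw [eq_inv_mul_of_mul_eq herase]
  exact mul_mem (inv_mem (cs.wordProd_mem_parab h))
    (cs.wordProd_mem_parab fun b hb => h b ((ω.eraseIdx_sublist m).subset hb))

theorem length_lt_length_mul_of_mem_parab {A : Set B} {j : B} (hjA : j ∉ A) {t : W}
    (ht : cs.IsReflection t) (htj : ∀ ω : List B, cs.IsReduced ω → π ω = t → j ∈ ω)
    {y : W} (hy : y ∈ parab cs A) : ℓ y < ℓ (y * t) := by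
  refine lt_of_le_of_ne (not_lt.mp fun hlt => hjA ?_) (ht.length_mul_left_ne y).symm
  obtain ⟨ω, hA, rfl⟩ := cs.exists_word_of_mem_parab hy
  have htA := cs.mem_parab_of_mem_rightInvSeq hA (cs.mem_rightInvSeq_of_isRightInversion ⟨ht, hlt⟩)
  obtain ⟨σ, hred, hσA, hσ⟩ := cs.exists_reduced_word_of_mem_parab htA
  exact hσA j (htj σ hred hσ)

theorem length_lt_length_mul_left_of_mem_parab {A : Set B} {j : B} (hjA : j ∉ A) {t : W}
    (ht : cs.IsReflection t) (htj : ∀ ω : List B, cs.IsReduced ω → π ω = t → j ∈ ω)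
    {y : W} (hy : y ∈ parab cs A) : ℓ y < ℓ (t * y) := by
  rw [← length_inv, ← cs.length_inv (t * y), mul_inv_rev, ht.inv]
  exact cs.length_lt_length_mul_of_mem_parab hjA ht htj (inv_mem hy)

theorem parab_mono {A A' : Set B} (h : A ⊆ A') : parab cs A ≤ parab cs A' :=
  Subgroup.closure_mono (Set.image_mono h)

theorem minLenQ_mk_le_length (I : Set B) (u : W) : minLenQ cs I (QuotientGroup.mk u) ≤ ℓ u :=
  Nat.sInf_le ⟨u, rfl, rfl⟩

theorem exists_length_eq_minLenQ (I : Set B) (x : W ⧸ parab cs I) :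
    ∃ u : W, (QuotientGroup.mk u : W ⧸ parab cs I) = x ∧ ℓ u = minLenQ cs I x := by
  obtain ⟨u, rfl⟩ := QuotientGroup.mk_surjective x
  exact Nat.sInf_mem (s := cs.length '' {v : W | (v : W ⧸ parab cs I) = u}) ⟨_, u, rfl, rfl⟩

end CoxeterSystem

theorem parabolic_on_left_side_general (cs : CoxeterSystem M W) (I : Set B) (i j : B)
    (hij : i ≠ j) (hjI : j ∉ I) (t : W) (ht : cs.IsReflection t)
    (htj : ∀ ω : List B, cs.IsReduced ω → cs.wordProd ω = t → j ∈ ω)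
    (w : W) (hw : w ∈ parab cs (I ∪ {i})) :
    minLenQ cs I (QuotientGroup.mk (t * w)) > minLenQ cs I (QuotientGroup.mk w) := by
  have hjK : j ∉ I ∪ {i} := by simp [hjI, hij.symm]
  obtain ⟨x, hx, hlen⟩ := cs.exists_length_eq_minLenQ I (QuotientGroup.mk (t * w))
  have hcoset : (QuotientGroup.mk (t * x) : W ⧸ parab cs I) = QuotientGroup.mk w := by
    rw [QuotientGroup.eq]
    simpa [mul_assoc, ht.inv] using QuotientGroup.eq.mp hx
  have htx : t * x ∈ parab cs (I ∪ {i}) := by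
    simpa using mul_mem hw (cs.parab_mono Set.subset_union_left (QuotientGroup.eq.mp hcoset.symm))
  have hlt : cs.length (t * x) < cs.length x := by
    simpa [← mul_assoc, ht.mul_self] using cs.length_lt_length_mul_left_of_mem_parab hjK ht htj htx
  calc minLenQ cs I (QuotientGroup.mk w) = minLenQ cs I (QuotientGroup.mk (t * x)) := by
        rw [hcoset]
    _ ≤ cs.length (t * x) := cs.minLenQ_mk_le_length I (t * x)
    _ < cs.length x := hlt
    _ = minLenQ cs I (QuotientGroup.mk (t * w)) := hlen

/-- Let `s = s_i, s' = s_j` be distinct simple reflections not in `I` (so `|I| ≤ |S| - 2`),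
and let `t` be a reflection all of whose reduced expressions contain `s'`. Then for every
`w ∈ W_{I ∪ {s}}` we have `ℓ((tw)^I) > ℓ(w^I)`: every coset `wW_I` with `w ∈ W_{I∪{s}}`
lies on the strictly increasing side of `t`. -/
theorem parabolic_on_left_side (cs : CoxeterSystem M W) (I : Set B) (i j : B)
    (hij : i ≠ j) (hiI : i ∉ I) (hjI : j ∉ I) (t : W) (ht : cs.IsReflection t)
    (htj : ∀ ω : List B, cs.IsReduced ω → cs.wordProd ω = t → j ∈ ω)
    (w : W) (hw : w ∈ parab cs (I ∪ {i})) :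
    minLenQ cs I (QuotientGroup.mk (t * w)) > minLenQ cs I (QuotientGroup.mk w) :=
  parabolic_on_left_side_general cs I i j hij hjI t ht htj w hw
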